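/- arXiv:2004.00140 — 5 statements merged into one kernel-verified Lean document; each statement's English description precedes it below -/
import Mathlib

section
/- Let μ be a σ-finite measure on a measurable space Ω, and let p, q : Ω → ℝ be nonnegative measurable functions with ∫ p dμ = 1 and ∫ q dμ = 1. For every measurable D : Ω → ℝ with 0 < D(ω) < 1 for all ω, if the functions p·log D, q·log(1−D), p·log(p/(p+q)) and q·log(q/(p+q)) are μ-integrable (with the convention 0·log(0/0) = 0), then ∫ p·log D dμ + ∫ q·log(1−D) dμ ≤ ∫ p·log(p/(p+q)) dμ + ∫ q·log(q/(p+q)) dμ. In other words, the GAN value function is maximized over discriminators by the optimal discriminator D*(ω) = p(ω)/(p(ω)+q(ω)). -/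
/-!
Pointwise, with `s = p + q`, the bound `log y ≤ y - 1` applied to `y = t s / p` and to
`y = (1 - t) s / q` gives `p log t + q log (1 - t) ≤ p log (p/s) + q log (q/s) + (t s - p) +
((1 - t) s - q)`, and the error terms cancel. Integrating the pointwise inequality proves the
theorem.
-/

open MeasureTheory Real

lemma mul_log_le_mul_log_div_add_sub {a x s : ℝ} (ha : 0 ≤ a) (hx : 0 < x) (hs : 0 < s) :
    a * log x ≤ a * log (a / s) + (x * s - a) := by
  rcases ha.eq_or_lt with rfl | ha
  · simpa using (mul_pos hx hs).le
  have hsplit : log x = log (a / s) + log (x * s / a) := by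
    rw [← log_mul (by positivity) (by positivity)]
    congr 1
    field_simp
  have hle : a * log (x * s / a) ≤ x * s - a := by
    have := mul_le_mul_of_nonneg_left (log_le_sub_one_of_pos (by positivity : 0 < x * s / a)) ha.le
    rwa [mul_sub, mul_div_cancel₀ _ ha.ne', mul_one] at this
  rw [hsplit, mul_add]
  linarith

lemma mul_log_add_mul_log_one_sub_le {a b t : ℝ} (ha : 0 ≤ a) (hb : 0 ≤ b) (ht0 : 0 < t)
    (ht1 : t < 1) :
    a * log t + b * log (1 - t) ≤ a * log (a / (a + b)) + b * log (b / (a + b)) := by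
  rcases (add_nonneg ha hb).eq_or_lt with hab | hab
  · obtain ⟨rfl, rfl⟩ : a = 0 ∧ b = 0 := ⟨by linarith, by linarith⟩
    simp
  have hA := mul_log_le_mul_log_div_add_sub ha ht0 hab
  have hB := mul_log_le_mul_log_div_add_sub hb (sub_pos.2 ht1) hab
  linarith

theorem gan_optimal_discriminator_general
    {Ω : Type*} [MeasurableSpace Ω] (μ : Measure Ω)
    (p q : Ω → ℝ)
    (hp0 : ∀ ω, 0 ≤ p ω) (hq0 : ∀ ω, 0 ≤ q ω)
    (D : Ω → ℝ) (hD0 : ∀ ω, 0 < D ω) (hD1 : ∀ ω, D ω < 1)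
    (h1 : Integrable (fun ω => p ω * Real.log (D ω)) μ)
    (h2 : Integrable (fun ω => q ω * Real.log (1 - D ω)) μ)
    (h3 : Integrable (fun ω => p ω * Real.log (p ω / (p ω + q ω))) μ)
    (h4 : Integrable (fun ω => q ω * Real.log (q ω / (p ω + q ω))) μ) :
    ∫ ω, p ω * Real.log (D ω) ∂μ + ∫ ω, q ω * Real.log (1 - D ω) ∂μ ≤
      ∫ ω, p ω * Real.log (p ω / (p ω + q ω)) ∂μ +
      ∫ ω, q ω * Real.log (q ω / (p ω + q ω)) ∂μ := by
  rw [← integral_add h1 h2, ← integral_add h3 h4]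
  exact integral_mono (h1.add h2) (h3.add h4) fun ω =>
    mul_log_add_mul_log_one_sub_le (hp0 ω) (hq0 ω) (hD0 ω) (hD1 ω)

theorem gan_optimal_discriminator
    {Ω : Type*} [MeasurableSpace Ω] (μ : Measure Ω) [SigmaFinite μ]
    (p q : Ω → ℝ) (hpm : Measurable p) (hqm : Measurable q)
    (hp0 : ∀ ω, 0 ≤ p ω) (hq0 : ∀ ω, 0 ≤ q ω)
    (hp1 : ∫ ω, p ω ∂μ = 1) (hq1 : ∫ ω, q ω ∂μ = 1)
    (D : Ω → ℝ) (hDm : Measurable D) (hD0 : ∀ ω, 0 < D ω) (hD1 : ∀ ω, D ω < 1)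
    (h1 : Integrable (fun ω => p ω * Real.log (D ω)) μ)
    (h2 : Integrable (fun ω => q ω * Real.log (1 - D ω)) μ)
    (h3 : Integrable (fun ω => p ω * Real.log (p ω / (p ω + q ω))) μ)
    (h4 : Integrable (fun ω => q ω * Real.log (q ω / (p ω + q ω))) μ) :
    ∫ ω, p ω * Real.log (D ω) ∂μ + ∫ ω, q ω * Real.log (1 - D ω) ∂μ ≤
      ∫ ω, p ω * Real.log (p ω / (p ω + q ω)) ∂μ +
      ∫ ω, q ω * Real.log (q ω / (p ω + q ω)) ∂μ :=
  gan_optimal_discriminator_general μ p q hp0 hq0 D hD0 hD1 h1 h2 h3 h4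
end

section
/- Let μ be a σ-finite measure on a measurable space Ω, let p, q : Ω → ℝ be nonnegative measurable functions with ∫ p dμ = 1 and ∫ q dμ = 1, and let P and Q be the probability measures with densities p and q with respect to μ. If p·log(p/(p+q)) and q·log(q/(p+q)) are μ-integrable (with the convention 0·log(0/0) = 0), then ∫ p·log(p/(p+q)) dμ + ∫ q·log(q/(p+q)) dμ = −2·log 2 + 2·JSD(P, Q). -/
open MeasureTheory ENNReal

/-- Kullback–Leibler divergence `KL(P ‖ M) = ∫ log (dP/dM) dP`. -/
noncomputable def klDiv {Ω : Type*} [MeasurableSpace Ω] (P M : Measure Ω) : ℝ :=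
  ∫ ω, Real.log ((P.rnDeriv M ω).toReal) ∂P

/-- Jensen–Shannon divergence
`JSD(P, Q) = (1/2) KL(P ‖ M) + (1/2) KL(Q ‖ M)` with `M = (1/2) • (P + Q)`. -/
noncomputable def jsd {Ω : Type*} [MeasurableSpace Ω] (P Q : Measure Ω) : ℝ :=
  (1 / 2) * klDiv P ((1 / 2 : ℝ≥0∞) • (P + Q)) +
  (1 / 2) * klDiv Q ((1 / 2 : ℝ≥0∞) • (P + Q))


/-! With `M = μ.withDensity ((p + q) / 2)`, the measure `P` has density `2p / (p + q)` with
respect to `M`, so `KL(P ‖ M) = ∫ p log (2p / (p + q)) dμ = log 2 + ∫ p log (p / (p + q)) dμ`.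
Adding the same identity for `Q` gives the claim. -/

section

variable {Ω : Type*} [MeasurableSpace Ω]

lemma klDiv_withDensity (ν : Measure Ω) [SigmaFinite ν] {h : Ω → ℝ≥0∞}
    (hh : Measurable h) :
    klDiv (ν.withDensity h) ν = ∫ ω, Real.log (h ω).toReal ∂ν.withDensity h := by
  refine integral_congr_ae ?_
  filter_upwards [(withDensity_absolutelyContinuous ν h).ae_le
    (Measure.rnDeriv_withDensity ν hh)] with ω hω
  rw [hω]

lemma withDensity_eq_withDensity_withDensity_div {μ : Measure Ω} {f d : Ω → ℝ≥0∞}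
    (hf : Measurable f) (hd : Measurable d) (hfd : ∀ᵐ ω ∂μ, d ω = 0 → f ω = 0)
    (hd_top : ∀ᵐ ω ∂μ, d ω ≠ ∞) :
    μ.withDensity f = (μ.withDensity d).withDensity (f / d) := by
  rw [← withDensity_mul μ hd (hf.div hd)]
  refine withDensity_congr_ae ?_
  filter_upwards [hfd, hd_top] with ω hfd hd_top
  by_cases h0 : d ω = 0
  · simp [h0, hfd h0]
  · exact (ENNReal.mul_div_cancel h0 hd_top).symm

lemma klDiv_withDensity_withDensity {μ : Measure Ω} {f d : Ω → ℝ≥0∞}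
    [SigmaFinite (μ.withDensity d)] (hf : Measurable f) (hd : Measurable d)
    (hfd : ∀ᵐ ω ∂μ, d ω = 0 → f ω = 0) (hf_top : ∀ᵐ ω ∂μ, f ω ≠ ∞)
    (hd_top : ∀ᵐ ω ∂μ, d ω ≠ ∞) :
    klDiv (μ.withDensity f) (μ.withDensity d) =
      ∫ ω, (f ω).toReal * Real.log (f ω / d ω).toReal ∂μ := by
  have hfd' := withDensity_eq_withDensity_withDensity_div hf hd hfd hd_top
  rw [hfd', klDiv_withDensity _ (hf.div hd), ← hfd',
    integral_withDensity_eq_integral_toReal_smul hf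
      (by simpa only [lt_top_iff_ne_top] using hf_top)]
  rfl

lemma mul_log_div_half_add {a b : ℝ} (ha : 0 ≤ a) (hb : 0 ≤ b) :
    a * Real.log (a / (1 / 2 * (a + b))) = a * Real.log (a / (a + b)) + a * Real.log 2 := by
  rcases ha.eq_or_lt with rfl | ha
  · simp
  have hab : 0 < a + b := by positivity
  rw [show a / (1 / 2 * (a + b)) = a / (a + b) * 2 by field_simp,
    Real.log_mul (by positivity) two_ne_zero]
  ring

lemma klDiv_withDensity_ofReal_mixture {μ : Measure Ω} {p q : Ω → ℝ}
    (hpm : Measurable p) (hqm : Measurable q) (hp0 : ∀ ω, 0 ≤ p ω) (hq0 : ∀ ω, 0 ≤ q ω)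
    (hp : Integrable p μ) (hq : Integrable q μ) (hp1 : ∫ ω, p ω ∂μ = 1)
    (hlog : Integrable (fun ω => p ω * Real.log (p ω / (p ω + q ω))) μ) :
    klDiv (μ.withDensity fun ω => ENNReal.ofReal (p ω))
      ((1 / 2 : ℝ≥0∞) • ((μ.withDensity fun ω => ENNReal.ofReal (p ω)) +
        μ.withDensity fun ω => ENNReal.ofReal (q ω))) =
      ∫ ω, p ω * Real.log (p ω / (p ω + q ω)) ∂μ + Real.log 2 := by
  set f := fun ω => ENNReal.ofReal (p ω)
  set g := fun ω => ENNReal.ofReal (q ω)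
  have hf : Measurable f := hpm.ennreal_ofReal
  have hg : Measurable g := hqm.ennreal_ofReal
  have := isFiniteMeasure_withDensity_ofReal hp.2
  have := isFiniteMeasure_withDensity_ofReal hq.2
  rw [← withDensity_add_left hf, ← withDensity_smul _ (hf.add hg)]
  have : IsFiniteMeasure (μ.withDensity ((1 / 2 : ℝ≥0∞) • (f + g))) := by
    rw [withDensity_smul _ (hf.add hg), withDensity_add_left hf]
    exact Measure.smul_finite _ (by simp)
  rw [klDiv_withDensity_withDensity hf ((hf.add hg).const_smul _)
    (ae_of_all _ fun ω => by simp +contextual [f]) (ae_of_all _ fun ω => ofReal_ne_top)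
    (ae_of_all _ fun ω => by simp [f, g, ENNReal.mul_eq_top])]
  calc _ = ∫ ω, p ω * Real.log (p ω / (p ω + q ω)) + p ω * Real.log 2 ∂μ := by
        refine integral_congr_ae (ae_of_all _ fun ω => ?_)
        simp only [f, g, Pi.smul_apply, Pi.add_apply, smul_eq_mul, toReal_div, toReal_mul,
          toReal_add ofReal_ne_top ofReal_ne_top, toReal_ofReal (hp0 ω), toReal_ofReal (hq0 ω)]
        norm_num
        exact mul_log_div_half_add (hp0 ω) (hq0 ω)
    _ = _ := by rw [integral_add hlog (hp.mul_const _), integral_mul_const, hp1, one_mul]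

end

theorem optimal_value_eq_jsd_general
    {Ω : Type*} [MeasurableSpace Ω] (μ : Measure Ω)
    (p q : Ω → ℝ) (hpm : Measurable p) (hqm : Measurable q)
    (hp0 : ∀ ω, 0 ≤ p ω) (hq0 : ∀ ω, 0 ≤ q ω)
    (hp1 : ∫ ω, p ω ∂μ = 1) (hq1 : ∫ ω, q ω ∂μ = 1)
    (h3 : Integrable (fun ω => p ω * Real.log (p ω / (p ω + q ω))) μ)
    (h4 : Integrable (fun ω => q ω * Real.log (q ω / (p ω + q ω))) μ) :
    ∫ ω, p ω * Real.log (p ω / (p ω + q ω)) ∂μ +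
      ∫ ω, q ω * Real.log (q ω / (p ω + q ω)) ∂μ =
    -2 * Real.log 2 +
      2 * jsd (μ.withDensity fun ω => ENNReal.ofReal (p ω))
              (μ.withDensity fun ω => ENNReal.ofReal (q ω)) := by
  have hp : Integrable p μ := .of_integral_ne_zero (by simp [hp1])
  have hq : Integrable q μ := .of_integral_ne_zero (by simp [hq1])
  have hKLp := klDiv_withDensity_ofReal_mixture hpm hqm hp0 hq0 hp hq hp1 h3
  have hKLq := klDiv_withDensity_ofReal_mixture hqm hpm hq0 hp0 hq hp hq1
    (by simpa only [add_comm (q _)] using h4)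
  rw [add_comm (μ.withDensity _)] at hKLq
  simp only [add_comm (q _)] at hKLq
  rw [jsd, hKLp, hKLq]
  ring

theorem optimal_value_eq_jsd
    {Ω : Type*} [MeasurableSpace Ω] (μ : Measure Ω) [SigmaFinite μ]
    (p q : Ω → ℝ) (hpm : Measurable p) (hqm : Measurable q)
    (hp0 : ∀ ω, 0 ≤ p ω) (hq0 : ∀ ω, 0 ≤ q ω)
    (hp1 : ∫ ω, p ω ∂μ = 1) (hq1 : ∫ ω, q ω ∂μ = 1)
    (h3 : Integrable (fun ω => p ω * Real.log (p ω / (p ω + q ω))) μ)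
    (h4 : Integrable (fun ω => q ω * Real.log (q ω / (p ω + q ω))) μ) :
    ∫ ω, p ω * Real.log (p ω / (p ω + q ω)) ∂μ +
      ∫ ω, q ω * Real.log (q ω / (p ω + q ω)) ∂μ =
    -2 * Real.log 2 +
      2 * jsd (μ.withDensity fun ω => ENNReal.ofReal (p ω))
              (μ.withDensity fun ω => ENNReal.ofReal (q ω)) :=
  optimal_value_eq_jsd_general μ p q hpm hqm hp0 hq0 hp1 hq1 h3 h4
end

section
/- Let μ be a σ-finite measure on a measurable space Ω, let p, q : Ω → ℝ be nonnegative measurable functions with ∫ p dμ = 1 and ∫ q dμ = 1, let P and Q be the probability measures with densities p and q with respect to μ, and let M = (1/2)•(P + Q). Then KL(P ‖ M) = log 2 + ∫ p·log(p/(p+q)) dμ, where the integral is taken with the convention 0·log(0/0) = 0 and is assumed finite. -/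
open MeasureTheory ENNReal

/-!
Both `P` and `M` have densities with respect to `μ`, namely `p` and `m = (p + q) / 2`, and `p`
vanishes wherever `m` does, so `dP/dM = p / m` holds `P`-a.e. and `KL(P ‖ M) = ∫ p log (p / m) dμ`.
Where `p > 0` we have `p / m = 2 · p / (p + q)`, so the integrand splits as
`p log 2 + p log (p / (p + q))`, and `∫ p dμ = 1`.
-/

namespace MeasureTheory

variable {Ω : Type*} [MeasurableSpace Ω] {μ : Measure Ω} {f g : Ω → ℝ≥0∞}

lemma withDensity_withDensity_div (hf : Measurable f) (hg : Measurable g)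
    (hfg : ∀ ω, g ω = 0 → f ω = 0) (hg_ne_top : ∀ ω, g ω ≠ ∞) :
    (μ.withDensity g).withDensity (f / g) = μ.withDensity f := by
  rw [← withDensity_mul _ hg (hf.div hg)]
  congr 1
  funext ω
  by_cases hω : g ω = 0
  · simp [hω, hfg ω hω]
  · exact ENNReal.mul_div_cancel hω (hg_ne_top ω)

lemma rnDeriv_withDensity_withDensity [SigmaFinite (μ.withDensity g)]
    (hf : Measurable f) (hg : Measurable g)
    (hfg : ∀ ω, g ω = 0 → f ω = 0) (hg_ne_top : ∀ ω, g ω ≠ ∞) :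
    (μ.withDensity f).rnDeriv (μ.withDensity g) =ᵐ[μ.withDensity f] f / g := by
  rw [← withDensity_withDensity_div hf hg hfg hg_ne_top]
  exact (withDensity_absolutelyContinuous _ _).ae_le
    (Measure.rnDeriv_withDensity _ (hf.div hg))

lemma klDiv_withDensity_ofReal [SigmaFinite μ] {p m : Ω → ℝ} (hp : Measurable p)
    (hm : Measurable m) (hp0 : ∀ ω, 0 ≤ p ω) (hm0 : ∀ ω, 0 ≤ m ω)
    (hpm : ∀ ω, m ω = 0 → p ω = 0) :
    klDiv (μ.withDensity fun ω => ENNReal.ofReal (p ω))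
        (μ.withDensity fun ω => ENNReal.ofReal (m ω)) =
      ∫ ω, p ω * Real.log (p ω / m ω) ∂μ := by
  have : SigmaFinite (μ.withDensity fun ω => ENNReal.ofReal (m ω)) :=
    SigmaFinite.withDensity_of_ne_top (ae_of_all _ fun _ => ofReal_ne_top)
  have hrn := rnDeriv_withDensity_withDensity (μ := μ) hp.ennreal_ofReal hm.ennreal_ofReal
    (fun ω hω => by simp [hpm ω ((ofReal_eq_zero.1 hω).antisymm (hm0 ω))])
    (fun _ => ofReal_ne_top)
  rw [klDiv, integral_congr_ae (hrn.mono fun ω hω => by rw [hω]),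
    integral_withDensity_eq_integral_toReal_smul hp.ennreal_ofReal
      (ae_of_all _ fun _ => ofReal_lt_top)]
  refine integral_congr_ae (ae_of_all _ fun ω => ?_)
  simp only [Pi.div_apply, toReal_div, toReal_ofReal (hp0 ω), toReal_ofReal (hm0 ω), smul_eq_mul]

lemma half_smul_withDensity_ofReal_add {p q : Ω → ℝ} (hp : Measurable p)
    (hp0 : ∀ ω, 0 ≤ p ω) (hq0 : ∀ ω, 0 ≤ q ω) :
    (1 / 2 : ℝ≥0∞) • ((μ.withDensity fun ω => ENNReal.ofReal (p ω)) +
        (μ.withDensity fun ω => ENNReal.ofReal (q ω))) =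
      μ.withDensity fun ω => ENNReal.ofReal ((p ω + q ω) / 2) := by
  rw [← withDensity_add_left hp.ennreal_ofReal, ← withDensity_smul' _ _ (by simp)]
  congr 1
  funext ω
  simp [ofReal_add (hp0 ω) (hq0 ω), div_eq_inv_mul, ofReal_mul, ofReal_inv_of_pos]

end MeasureTheory

lemma mul_log_div_midpoint (a b : ℝ) (ha : 0 ≤ a) (hb : 0 ≤ b) :
    a * Real.log (a / ((a + b) / 2)) = a * Real.log 2 + a * Real.log (a / (a + b)) := by
  rcases ha.eq_or_lt with rfl | ha
  · simp
  have hab : a / ((a + b) / 2) = 2 * (a / (a + b)) := by field_simp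
  rw [hab, Real.log_mul two_ne_zero (div_pos ha (by linarith)).ne', mul_add]

theorem kl_to_mixture_eq_general
    {Ω : Type*} [MeasurableSpace Ω] (μ : Measure Ω) [SigmaFinite μ]
    (p q : Ω → ℝ) (hpm : Measurable p) (hqm : Measurable q)
    (hp0 : ∀ ω, 0 ≤ p ω) (hq0 : ∀ ω, 0 ≤ q ω)
    (hp1 : ∫ ω, p ω ∂μ = 1)
    (hint : Integrable (fun ω => p ω * Real.log (p ω / (p ω + q ω))) μ) :
    klDiv (μ.withDensity fun ω => ENNReal.ofReal (p ω))
        ((1 / 2 : ℝ≥0∞) • ((μ.withDensity fun ω => ENNReal.ofReal (p ω)) +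
          (μ.withDensity fun ω => ENNReal.ofReal (q ω)))) =
      Real.log 2 + ∫ ω, p ω * Real.log (p ω / (p ω + q ω)) ∂μ := by
  have hmid0 : ∀ ω, 0 ≤ (p ω + q ω) / 2 := fun ω => by linarith [hp0 ω, hq0 ω]
  have hmid : ∀ ω, (p ω + q ω) / 2 = 0 → p ω = 0 := fun ω h => by linarith [hp0 ω, hq0 ω]
  rw [half_smul_withDensity_ofReal_add hpm hp0 hq0,
    klDiv_withDensity_ofReal (m := fun ω => (p ω + q ω) / 2) hpm
      ((hpm.add hqm).div_const 2) hp0 hmid0 hmid]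
  simp_rw [mul_log_div_midpoint _ _ (hp0 _) (hq0 _)]
  rw [integral_add ((integrable_of_integral_eq_one hp1).mul_const _) hint, integral_mul_const,
    hp1, one_mul]

theorem kl_to_mixture_eq
    {Ω : Type*} [MeasurableSpace Ω] (μ : Measure Ω) [SigmaFinite μ]
    (p q : Ω → ℝ) (hpm : Measurable p) (hqm : Measurable q)
    (hp0 : ∀ ω, 0 ≤ p ω) (hq0 : ∀ ω, 0 ≤ q ω)
    (hp1 : ∫ ω, p ω ∂μ = 1) (hq1 : ∫ ω, q ω ∂μ = 1)
    (hint : Integrable (fun ω => p ω * Real.log (p ω / (p ω + q ω))) μ) :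
    klDiv (μ.withDensity fun ω => ENNReal.ofReal (p ω))
        ((1 / 2 : ℝ≥0∞) • ((μ.withDensity fun ω => ENNReal.ofReal (p ω)) +
          (μ.withDensity fun ω => ENNReal.ofReal (q ω)))) =
      Real.log 2 + ∫ ω, p ω * Real.log (p ω / (p ω + q ω)) ∂μ :=
  kl_to_mixture_eq_general μ p q hpm hqm hp0 hq0 hp1 hint
end

section
/- Let P be a probability measure on a measurable space Ω. For every measurable D : Ω → ℝ with 0 < D(ω) < 1 for all ω such that log D and log(1 − D) are P-integrable, we have ∫ log D dP + ∫ log(1 − D) dP ≤ −2·log 2, with equality when D is the constant 1/2. That is, when the generated distribution equals the data distribution, the optimal discriminator value is −2·log 2, attained by D ≡ 1/2. -/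
open MeasureTheory

lemma Real.log_add_log_one_sub_le {x : ℝ} (hx0 : 0 < x) (hx1 : x < 1) :
    Real.log x + Real.log (1 - x) ≤ -2 * Real.log 2 := by
  have hprod_le : x * (1 - x) ≤ (2 ^ 2)⁻¹ := by nlinarith [sq_nonneg (x - 1 / 2)]
  calc Real.log x + Real.log (1 - x) = Real.log (x * (1 - x)) :=
        (Real.log_mul hx0.ne' (sub_pos.2 hx1).ne').symm
    _ ≤ Real.log ((2 ^ 2)⁻¹) := Real.log_le_log (mul_pos hx0 (sub_pos.2 hx1)) hprod_le
    _ = -2 * Real.log 2 := by rw [Real.log_inv, Real.log_pow]; push_cast; ring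

lemma Real.log_half_add_log_one_sub_half :
    Real.log (1 / 2) + Real.log (1 - 1 / 2) = -2 * Real.log 2 := by
  rw [show (1 : ℝ) - 1 / 2 = 1 / 2 by norm_num, one_div, Real.log_inv]
  ring

theorem equal_distributions_optimal_value_general
    {Ω : Type*} [MeasurableSpace Ω] (P : Measure Ω) [IsProbabilityMeasure P]
    (D : Ω → ℝ) (hD0 : ∀ ω, 0 < D ω) (hD1 : ∀ ω, D ω < 1)
    (h1 : Integrable (fun ω => Real.log (D ω)) P)
    (h2 : Integrable (fun ω => Real.log (1 - D ω)) P) :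
    (∫ ω, Real.log (D ω) ∂P + ∫ ω, Real.log (1 - D ω) ∂P ≤ -2 * Real.log 2) ∧
    ((∀ ω, D ω = 1 / 2) →
      ∫ ω, Real.log (D ω) ∂P + ∫ ω, Real.log (1 - D ω) ∂P = -2 * Real.log 2) := by
  rw [← integral_add h1 h2]
  refine ⟨?_, fun hD_half => ?_⟩
  · calc ∫ ω, (Real.log (D ω) + Real.log (1 - D ω)) ∂P
        ≤ ∫ _, -2 * Real.log 2 ∂P :=
          integral_mono (h1.add h2) (integrable_const _)
            fun ω => Real.log_add_log_one_sub_le (hD0 ω) (hD1 ω)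
      _ = -2 * Real.log 2 := by simp
  · simp only [hD_half, Real.log_half_add_log_one_sub_half, integral_const, probReal_univ,
      one_smul]

theorem equal_distributions_optimal_value
    {Ω : Type*} [MeasurableSpace Ω] (P : Measure Ω) [IsProbabilityMeasure P]
    (D : Ω → ℝ) (hDm : Measurable D) (hD0 : ∀ ω, 0 < D ω) (hD1 : ∀ ω, D ω < 1)
    (h1 : Integrable (fun ω => Real.log (D ω)) P)
    (h2 : Integrable (fun ω => Real.log (1 - D ω)) P) :
    (∫ ω, Real.log (D ω) ∂P + ∫ ω, Real.log (1 - D ω) ∂P ≤ -2 * Real.log 2) ∧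
    ((∀ ω, D ω = 1 / 2) →
      ∫ ω, Real.log (D ω) ∂P + ∫ ω, Real.log (1 - D ω) ∂P = -2 * Real.log 2) :=
  equal_distributions_optimal_value_general P D hD0 hD1 h1 h2
end

section
/- Let μ be a σ-finite measure on a measurable space Ω, let p : Ω → ℝ be a fixed nonnegative measurable function with ∫ p dμ = 1, and let P be the probability measure with density p with respect to μ. For a nonnegative measurable q : Ω → ℝ with ∫ q dμ = 1 and associated probability measure Q, define C(Q) = −2·log 2 + 2·JSD(P, Q). Then C(Q) ≥ −2·log 2 for every such Q, and C(Q) = −2·log 2 if and only if Q = P. That is, the GAN generator objective attains its global minimum value −2·log 2 exactly when the generated distribution recovers the true data distribution. -/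
/-!
The densities of `P` and `Q` with respect to the mixture `M = (P + Q) / 2` are bounded by `2`, so
their log-likelihood ratios are integrable and both real-valued divergences `KL(· ‖ M)` coincide
with Mathlib's `InformationTheory.klDiv`. Gibbs' inequality with its equality case then gives
`JSD(P, Q) ≥ 0`, with equality iff `P = M = Q`.
-/

open MeasureTheory ENNReal

section

variable {Ω : Type*} [MeasurableSpace Ω] {μ ν : Measure Ω} {c : ℝ≥0∞}

lemma rnDeriv_le_of_le_smul [SigmaFinite ν] (h : μ ≤ c • ν) : μ.rnDeriv ν ≤ᵐ[ν] fun _ ↦ c := by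
  refine ae_le_of_forall_setLIntegral_le_of_sigmaFinite (μ.measurable_rnDeriv ν) fun s _ _ ↦ ?_
  calc ∫⁻ x in s, μ.rnDeriv ν x ∂ν ≤ μ s := Measure.setLIntegral_rnDeriv_le s
    _ ≤ c * ν s := h s
    _ = ∫⁻ _ in s, c ∂ν := (setLIntegral_const s c).symm

variable [IsFiniteMeasure μ] [IsFiniteMeasure ν]

lemma integrable_llr_of_le_smul (h : μ ≤ c • ν) (hc : c ≠ ∞) : Integrable (llr μ ν) μ := by
  rw [← InformationTheory.integrable_klFun_rnDeriv_iff (Measure.absolutelyContinuous_of_le_smul h)]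
  obtain ⟨C, hC⟩ := isCompact_Icc.exists_bound_of_continuousOn
    (InformationTheory.continuous_klFun.continuousOn (s := Set.Icc 0 c.toReal))
  have h_meas := InformationTheory.measurable_klFun.comp (μ.measurable_rnDeriv ν).ennreal_toReal
  refine Integrable.of_bound h_meas.aestronglyMeasurable C ?_
  filter_upwards [rnDeriv_le_of_le_smul h] with x hx
  exact hC _ ⟨ENNReal.toReal_nonneg, ENNReal.toReal_mono hc hx⟩

lemma klDiv_eq_toReal_klDiv (hμν : μ ≪ ν) (h_univ : μ Set.univ = ν Set.univ) :
    klDiv μ ν = (InformationTheory.klDiv μ ν).toReal :=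
  (InformationTheory.toReal_klDiv_of_measure_eq hμν h_univ).symm

lemma klDiv_nonneg (hμν : μ ≪ ν) (h_univ : μ Set.univ = ν Set.univ) : 0 ≤ klDiv μ ν :=
  klDiv_eq_toReal_klDiv hμν h_univ ▸ ENNReal.toReal_nonneg

lemma klDiv_self : klDiv μ μ = 0 := by
  rw [klDiv_eq_toReal_klDiv Measure.AbsolutelyContinuous.rfl rfl, InformationTheory.klDiv_self,
    ENNReal.toReal_zero]

/-- Without the bound `μ ≤ c • ν` the log-likelihood ratio may fail to be integrable, and then
`klDiv μ ν` is the junk value `0` although `μ ≠ ν`. -/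
lemma klDiv_eq_zero_iff_of_le_smul (h_univ : μ Set.univ = ν Set.univ) (h : μ ≤ c • ν)
    (hc : c ≠ ∞) : klDiv μ ν = 0 ↔ μ = ν := by
  have hμν := Measure.absolutelyContinuous_of_le_smul h
  rw [klDiv_eq_toReal_klDiv hμν h_univ, ENNReal.toReal_eq_zero_iff,
    or_iff_left (InformationTheory.klDiv_ne_top hμν (integrable_llr_of_le_smul h hc)),
    InformationTheory.klDiv_eq_zero_iff]

end

section

variable {Ω : Type*} [MeasurableSpace Ω] (P Q : Measure Ω)

lemma half_smul_add_self : (1 / 2 : ℝ≥0∞) • (P + P) = P := by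
  rw [← two_smul ℝ≥0∞ P, smul_smul, one_div, ENNReal.inv_mul_cancel two_ne_zero ofNat_ne_top,
    one_smul]

lemma le_two_smul_half_smul_add_left : P ≤ (2 : ℝ≥0∞) • ((1 / 2 : ℝ≥0∞) • (P + Q)) := by
  rw [smul_smul, one_div, ENNReal.mul_inv_cancel two_ne_zero ofNat_ne_top, one_smul]
  exact Measure.le_add_right le_rfl

lemma le_two_smul_half_smul_add_right : Q ≤ (2 : ℝ≥0∞) • ((1 / 2 : ℝ≥0∞) • (P + Q)) :=
  add_comm P Q ▸ le_two_smul_half_smul_add_left Q P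

variable [IsProbabilityMeasure P] [IsProbabilityMeasure Q]

instance isProbabilityMeasure_half_smul_add : IsProbabilityMeasure ((1 / 2 : ℝ≥0∞) • (P + Q)) := by
  constructor
  simp only [Measure.smul_apply, Measure.add_apply, measure_univ, smul_eq_mul]
  rw [one_add_one_eq_two, one_div, ENNReal.inv_mul_cancel two_ne_zero ofNat_ne_top]

lemma klDiv_half_smul_add_left_nonneg : 0 ≤ klDiv P ((1 / 2 : ℝ≥0∞) • (P + Q)) :=
  klDiv_nonneg (Measure.absolutelyContinuous_of_le_smul (le_two_smul_half_smul_add_left P Q))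
    (by rw [measure_univ, measure_univ])

lemma klDiv_half_smul_add_right_nonneg : 0 ≤ klDiv Q ((1 / 2 : ℝ≥0∞) • (P + Q)) :=
  klDiv_nonneg (Measure.absolutelyContinuous_of_le_smul (le_two_smul_half_smul_add_right P Q))
    (by rw [measure_univ, measure_univ])

lemma jsd_nonneg : 0 ≤ jsd P Q := by
  have := klDiv_half_smul_add_left_nonneg P Q
  have := klDiv_half_smul_add_right_nonneg P Q
  rw [jsd]
  positivity

lemma jsd_eq_zero_iff : jsd P Q = 0 ↔ P = Q := by
  refine ⟨fun h ↦ ?_, by rintro rfl; rw [jsd, half_smul_add_self, klDiv_self]; simp⟩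
  have hP := klDiv_half_smul_add_left_nonneg P Q
  have hQ := klDiv_half_smul_add_right_nonneg P Q
  rw [jsd] at h
  have hPM := (klDiv_eq_zero_iff_of_le_smul (by rw [measure_univ, measure_univ])
    (le_two_smul_half_smul_add_left P Q) ofNat_ne_top).mp (by linarith)
  have hQM := (klDiv_eq_zero_iff_of_le_smul (by rw [measure_univ, measure_univ])
    (le_two_smul_half_smul_add_right P Q) ofNat_ne_top).mp (by linarith)
  exact hPM.trans hQM.symm

end

lemma isProbabilityMeasure_withDensity_ofReal {Ω : Type*} [MeasurableSpace Ω] {μ : Measure Ω}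
    {f : Ω → ℝ} (hf0 : 0 ≤ᵐ[μ] f) (hf1 : ∫ ω, f ω ∂μ = 1) :
    IsProbabilityMeasure (μ.withDensity fun ω ↦ ENNReal.ofReal (f ω)) := by
  have hf : Integrable f μ := Integrable.of_integral_ne_zero (by rw [hf1]; exact one_ne_zero)
  constructor
  rw [withDensity_apply _ MeasurableSet.univ, setLIntegral_univ,
    ← ofReal_integral_eq_lintegral_ofReal hf hf0, hf1, ENNReal.ofReal_one]

theorem gan_generator_objective_min_general
    {Ω : Type*} [MeasurableSpace Ω] (μ : Measure Ω)
    (p q : Ω → ℝ)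
    (hp0 : ∀ ω, 0 ≤ p ω) (hq0 : ∀ ω, 0 ≤ q ω)
    (hp1 : ∫ ω, p ω ∂μ = 1) (hq1 : ∫ ω, q ω ∂μ = 1) :
    -2 * Real.log 2 ≤
      -2 * Real.log 2 +
        2 * jsd (μ.withDensity fun ω => ENNReal.ofReal (p ω))
                (μ.withDensity fun ω => ENNReal.ofReal (q ω)) ∧
    (-2 * Real.log 2 +
        2 * jsd (μ.withDensity fun ω => ENNReal.ofReal (p ω))
                (μ.withDensity fun ω => ENNReal.ofReal (q ω)) = -2 * Real.log 2 ↔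
      (μ.withDensity fun ω => ENNReal.ofReal (q ω)) =
        (μ.withDensity fun ω => ENNReal.ofReal (p ω))) := by
  have := isProbabilityMeasure_withDensity_ofReal (ae_of_all μ hp0) hp1
  have := isProbabilityMeasure_withDensity_ofReal (ae_of_all μ hq0) hq1
  refine ⟨le_add_of_nonneg_right (mul_nonneg zero_le_two (jsd_nonneg _ _)), ?_⟩
  rw [add_eq_left, mul_eq_zero, or_iff_right two_ne_zero, jsd_eq_zero_iff, eq_comm]

theorem gan_generator_objective_min
    {Ω : Type*} [MeasurableSpace Ω] (μ : Measure Ω) [SigmaFinite μ]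
    (p q : Ω → ℝ) (hpm : Measurable p) (hqm : Measurable q)
    (hp0 : ∀ ω, 0 ≤ p ω) (hq0 : ∀ ω, 0 ≤ q ω)
    (hp1 : ∫ ω, p ω ∂μ = 1) (hq1 : ∫ ω, q ω ∂μ = 1) :
    -2 * Real.log 2 ≤
      -2 * Real.log 2 +
        2 * jsd (μ.withDensity fun ω => ENNReal.ofReal (p ω))
                (μ.withDensity fun ω => ENNReal.ofReal (q ω)) ∧
    (-2 * Real.log 2 +
        2 * jsd (μ.withDensity fun ω => ENNReal.ofReal (p ω))
                (μ.withDensity fun ω => ENNReal.ofReal (q ω)) = -2 * Real.log 2 ↔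
      (μ.withDensity fun ω => ENNReal.ofReal (q ω)) =
        (μ.withDensity fun ω => ENNReal.ofReal (p ω))) :=
  gan_generator_objective_min_general μ p q hp0 hq0 hp1 hq1
end
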